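/- Let Δ ⊂ ℂ² be a rank-4 lattice and Γ ⊂ ℂ a rank-2 lattice such that the standard symplectic form q((a,b),(c,d)) = ad − bc maps Δ × Δ into Γ ⊗ ℚ (i.e., q(δ, δ') ∈ ℚ·Γ for all δ, δ' ∈ Δ). Suppose moreover Δ ⊗ ℚ = σ(K) ⊕ σ(K) for an embedding σ of an imaginary quadratic field K into ℂ. Then Γ ⊗ ℚ ⊆ σ(K), and hence the elliptic curve ℂ/Γ has complex multiplication by K. -/

import Mathlib

lemma exists_den {M : Type} [AddCommGroup M] [Module ℚ M] (P : Submodule ℤ M)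
    (x : M) (hx : x ∈ Submodule.span ℚ (P : Set M)) :
    ∃ n : ℕ, 0 < n ∧ (n : ℚ) • x ∈ P := by
  induction hx using Submodule.span_induction with
  | mem y hy => exact ⟨1, one_pos, by simpa using hy⟩
  | zero => exact ⟨1, one_pos, by simp⟩
  | add y z _ _ hy hz =>
    obtain ⟨n, hn, hny⟩ := hy
    obtain ⟨m, hm, hmz⟩ := hz
    refine ⟨n * m, Nat.mul_pos hn hm, ?_⟩
    have key : ((n * m : ℕ) : ℚ) • (y + z)
        = (m : ℤ) • ((n : ℚ) • y) + (n : ℤ) • ((m : ℚ) • z) := by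
      rw [← Int.cast_smul_eq_zsmul ℚ (m : ℤ), ← Int.cast_smul_eq_zsmul ℚ (n : ℤ),
        smul_smul, smul_smul, smul_add]
      push_cast
      rw [mul_comm (n : ℚ) (m : ℚ)]
    rw [key]
    exact P.add_mem (P.smul_mem _ hny) (P.smul_mem _ hmz)
  | smul q y _ hy =>
    obtain ⟨n, hn, hny⟩ := hy
    refine ⟨n * q.den, Nat.mul_pos hn q.pos, ?_⟩
    have key : ((n * q.den : ℕ) : ℚ) • (q • y) = q.num • ((n : ℚ) • y) := by
      rw [← Int.cast_smul_eq_zsmul ℚ (q.num), smul_smul, smul_smul]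
      congr 1
      push_cast
      rw [mul_assoc, mul_comm (q.den : ℚ) q, Rat.mul_den_eq_num, mul_comm]
    rw [key]
    exact P.smul_mem _ hny

/-- Let `Δ ⊂ ℂ²` be a rank-4 lattice and `Γ ⊂ ℂ` a rank-2 lattice such
that the standard symplectic form `q((a,b),(c,d)) = ad − bc` maps `Δ × Δ` into `Γ ⊗ ℚ`
(the ℚ-span of Γ). Suppose moreover `Δ ⊗ ℚ = σ(K) ⊕ σ(K)` for an embedding `σ` of an
imaginary quadratic number field `K` into ℂ. Then `Γ ⊗ ℚ ⊆ σ(K)`, and hence the elliptic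
curve `ℂ/Γ` has complex multiplication by `K`: some `λ ∈ ℂ \ ℤ` satisfies `λΓ ⊆ Γ`. -/
theorem iwasawa_base_and_fibre_cm
    (K : Type) [Field K] [NumberField K]
    (hK2 : Module.finrank ℚ K = 2)
    (himag : ∀ φ : K →+* ℝ, False)
    (σ : K →+* ℂ)
    (Δ : AddSubgroup (ℂ × ℂ)) (BΔ : Module.Basis (Fin 4) ℤ Δ)
    (hΔspan : Submodule.span ℝ (Δ : Set (ℂ × ℂ)) = ⊤)
    (Γ : AddSubgroup ℂ) (BΓ : Module.Basis (Fin 2) ℤ Γ)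
    (hΓspan : Submodule.span ℝ (Γ : Set ℂ) = ⊤)
    (hq : ∀ d ∈ Δ, ∀ d' ∈ Δ,
      d.1 * d'.2 - d.2 * d'.1 ∈ Submodule.span ℚ (Γ : Set ℂ))
    (hΔQ : Submodule.span ℚ (Δ : Set (ℂ × ℂ)) =
      (Submodule.span ℚ (Set.range σ)).prod (Submodule.span ℚ (Set.range σ))) :
    Submodule.span ℚ (Γ : Set ℂ) ≤ Submodule.span ℚ (Set.range σ) ∧
      ∃ lam : ℂ, lam ∉ Set.range ((↑) : ℤ → ℂ) ∧ ∀ γ ∈ Γ, lam * γ ∈ Γ := by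
  classical
  set SK := Submodule.span ℚ (Set.range σ) with hSKdef
  set SG := Submodule.span ℚ (Γ : Set ℂ) with hSGdef
  -- σ as a ℚ-linear map
  have hsmul : ∀ (q : ℚ) (k : K), σ (q • k) = q • σ k := by
    intro q k
    rw [Rat.smul_def, map_mul, map_ratCast, Rat.smul_def]
  let σL : K →ₗ[ℚ] ℂ :=
    { toFun := σ, map_add' := map_add σ, map_smul' := hsmul }
  have hσLinj : Function.Injective σL := fun a b h => σ.injective h
  have hSKrange : SK = LinearMap.range σL := by
    apply le_antisymm
    · rw [hSKdef, Submodule.span_le]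
      rintro _ ⟨k, rfl⟩
      exact ⟨k, rfl⟩
    · rintro x ⟨k, rfl⟩
      exact Submodule.subset_span ⟨k, rfl⟩
  have finSK : Module.finrank ℚ SK = 2 := by
    rw [hSKrange, LinearMap.finrank_range_of_inj hσLinj, hK2]
  -- the generators of Γ
  set g : Fin 2 → ℂ := fun i => (BΓ i : ℂ) with hgdef
  have hgΓ : ∀ i, g i ∈ Γ := fun i => (BΓ i).2
  have hmemspan : ∀ γ ∈ Γ, γ ∈ Submodule.span ℤ (Set.range g) := by
    intro γ hγ
    let j : Γ →ₗ[ℤ] ℂ := Γ.subtype.toIntLinearMap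
    have h1 : (⟨γ, hγ⟩ : Γ) ∈ (⊤ : Submodule ℤ Γ) := trivial
    rw [← BΓ.span_eq] at h1
    have h2 := Submodule.mem_map_of_mem (f := j) h1
    rw [Submodule.map_span] at h2
    have himg : j '' Set.range BΓ = Set.range g := by
      rw [← Set.range_comp]; rfl
    rwa [himg] at h2
  have hSGg : SG = Submodule.span ℚ (Set.range g) := by
    apply le_antisymm
    · rw [hSGdef, Submodule.span_le]
      intro γ hγ
      have h1 := hmemspan γ hγ
      have hle : Submodule.span ℤ (Set.range g) ≤
          (Submodule.span ℚ (Set.range g)).restrictScalars ℤ := by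
        rw [Submodule.span_le]
        exact fun x hx => Submodule.subset_span hx
      exact hle h1
    · rw [Submodule.span_le]
      rintro _ ⟨i, rfl⟩
      exact Submodule.subset_span (hgΓ i)
  have finSGfd : FiniteDimensional ℚ SG := by
    rw [hSGg]
    exact FiniteDimensional.span_of_finite ℚ (Set.finite_range g)
  have finSG : Module.finrank ℚ SG ≤ 2 := by
    rw [hSGg]
    have := finrank_range_le_card (R := ℚ) g
    simpa [Set.finrank] using this
  -- Step B : SK ≤ SG using the symplectic form
  have hKle : SK ≤ SG := by
    set F : (ℂ × ℂ) → (ℂ × ℂ) →ₗ[ℚ] ℂ := fun v =>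
      (LinearMap.mulLeft ℚ v.2).comp (LinearMap.fst ℚ ℂ ℂ)
        - (LinearMap.mulLeft ℚ v.1).comp (LinearMap.snd ℚ ℂ ℂ) with hFdef
    have hF : ∀ v u, F v u = u.1 * v.2 - u.2 * v.1 := by
      intro v u
      simp only [hFdef, LinearMap.sub_apply, LinearMap.comp_apply,
        LinearMap.mulLeft_apply, LinearMap.fst_apply, LinearMap.snd_apply]
      try ring
    set G : (ℂ × ℂ) → (ℂ × ℂ) →ₗ[ℚ] ℂ := fun u =>
      (LinearMap.mulLeft ℚ u.1).comp (LinearMap.snd ℚ ℂ ℂ)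
        - (LinearMap.mulLeft ℚ u.2).comp (LinearMap.fst ℚ ℂ ℂ) with hGdef
    have hG : ∀ u v, G u v = u.1 * v.2 - u.2 * v.1 := by
      intro u v
      simp only [hGdef, LinearMap.sub_apply, LinearMap.comp_apply,
        LinearMap.mulLeft_apply, LinearMap.fst_apply, LinearMap.snd_apply]
      try ring
    have step1 : ∀ v ∈ Δ, ∀ u ∈ Submodule.span ℚ (Δ : Set (ℂ × ℂ)),
        u.1 * v.2 - u.2 * v.1 ∈ SG := by
      intro v hv u hu
      have hle : Submodule.span ℚ (Δ : Set (ℂ × ℂ)) ≤ Submodule.comap (F v) SG := by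
        rw [Submodule.span_le]
        intro d hd
        simp only [Set.mem_preimage, SetLike.mem_coe, Submodule.mem_comap, hF]
        exact hq d hd v hv
      have := hle hu
      rwa [Submodule.mem_comap, hF] at this
    have step2 : ∀ u ∈ Submodule.span ℚ (Δ : Set (ℂ × ℂ)),
        ∀ v ∈ Submodule.span ℚ (Δ : Set (ℂ × ℂ)),
        u.1 * v.2 - u.2 * v.1 ∈ SG := by
      intro u hu v hv
      have hle : Submodule.span ℚ (Δ : Set (ℂ × ℂ)) ≤ Submodule.comap (G u) SG := by
        rw [Submodule.span_le]
        intro d hd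
        simp only [Set.mem_preimage, SetLike.mem_coe, Submodule.mem_comap, hG]
        exact step1 d hd u hu
      have := hle hv
      rwa [Submodule.mem_comap, hG] at this
    rw [hSKdef, Submodule.span_le]
    rintro _ ⟨k, rfl⟩
    have h1 : ((σ k, 0) : ℂ × ℂ) ∈ Submodule.span ℚ (Δ : Set (ℂ × ℂ)) := by
      rw [hΔQ, Submodule.mem_prod]
      exact ⟨Submodule.subset_span ⟨k, rfl⟩, Submodule.zero_mem _⟩
    have h2 : ((0, 1) : ℂ × ℂ) ∈ Submodule.span ℚ (Δ : Set (ℂ × ℂ)) := by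
      rw [hΔQ, Submodule.mem_prod]
      exact ⟨Submodule.zero_mem _, Submodule.subset_span ⟨1, map_one σ⟩⟩
    have := step2 _ h1 _ h2
    simpa using this
  have hEq : SK = SG := Submodule.eq_of_le_of_finrank_le hKle (by rw [finSK]; exact finSG)
  refine ⟨le_of_eq hEq.symm, ?_⟩
  -- choose an irrational element of K
  have hexx : ∃ x : K, ∀ q : ℚ, x ≠ (q : K) := by
    by_contra h
    push_neg at h
    have htop : LinearMap.range (Algebra.linearMap ℚ K) = ⊤ := by
      apply top_unique
      intro x _
      obtain ⟨q, hq'⟩ := h x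
      exact ⟨q, show (algebraMap ℚ K) q = x from (eq_ratCast (algebraMap ℚ K) q).trans hq'.symm⟩
    have hr := LinearMap.finrank_range_le (Algebra.linearMap ℚ K)
    rw [htop, finrank_top, hK2, Module.finrank_self] at hr
    omega
  obtain ⟨x, hx⟩ := hexx
  set α : ℂ := σ x with hαdef
  -- α * g i ∈ SG
  have hαg : ∀ i : Fin 2, α * g i ∈ SG := by
    intro i
    have hgi : g i ∈ SG := Submodule.subset_span (hgΓ i)
    rw [← hEq, hSKrange] at hgi
    obtain ⟨k, hk⟩ := hgi
    have hk' : σ k = g i := hk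
    have : α * g i = σ (x * k) := by rw [map_mul, hk']
    rw [this, ← hEq]
    exact Submodule.subset_span ⟨x * k, rfl⟩
  set P : Submodule ℤ ℂ := AddSubgroup.toIntSubmodule Γ with hPdef
  have hPcoe : ∀ z : ℂ, z ∈ P ↔ z ∈ Γ := fun z => Iff.rfl
  have hPspan : (Submodule.span ℚ (P : Set ℂ)) = SG := by
    rw [hSGdef]; rfl
  obtain ⟨n0, hn0, h0⟩ := exists_den P (α * g 0) (by rw [hPspan]; exact hαg 0)
  obtain ⟨n1, hn1, h1⟩ := exists_den P (α * g 1) (by rw [hPspan]; exact hαg 1)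
  set lam : ℂ := ((n0 * n1 : ℕ) : ℂ) * α with hlamdef
  have hNpos : 0 < n0 * n1 := Nat.mul_pos hn0 hn1
  have key0 : lam * g 0 = (n1 : ℤ) • ((n0 : ℚ) • (α * g 0)) := by
    rw [hlamdef, zsmul_eq_mul, Rat.smul_def]
    push_cast
    ring
  have key1 : lam * g 1 = (n0 : ℤ) • ((n1 : ℚ) • (α * g 1)) := by
    rw [hlamdef, zsmul_eq_mul, Rat.smul_def]
    push_cast
    ring
  have hm0 : lam * g 0 ∈ P := by rw [key0]; exact P.smul_mem _ h0
  have hm1 : lam * g 1 ∈ P := by rw [key1]; exact P.smul_mem _ h1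
  have hmul : ∀ i : Fin 2, lam * g i ∈ P := by
    intro i
    fin_cases i
    · exact hm0
    · exact hm1
  refine ⟨lam, ?_, ?_⟩
  · rintro ⟨m, hm⟩
    have hN : ((n0 * n1 : ℕ) : ℂ) ≠ 0 := Nat.cast_ne_zero.2 hNpos.ne'
    have hα : α = (m : ℂ) / ((n0 * n1 : ℕ) : ℂ) := by
      rw [eq_div_iff hN]
      exact (mul_comm α _).trans hm.symm
    have hσx : α = (((m : ℚ) / ((n0 * n1 : ℕ) : ℚ) : ℚ) : ℂ) := by
      rw [hα]; push_cast; ring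
    have : x = (((m : ℚ) / ((n0 * n1 : ℕ) : ℚ) : ℚ) : K) := by
      apply σ.injective
      rw [map_ratCast]
      exact hσx
    exact hx _ this
  · intro γ hγ
    have h1 := hmemspan γ hγ
    have h2 : Submodule.span ℤ (Set.range g) ≤
        Submodule.comap (LinearMap.mulLeft ℤ lam) P := by
      rw [Submodule.span_le]
      rintro _ ⟨i, rfl⟩
      simp only [Set.mem_preimage, SetLike.mem_coe, Submodule.mem_comap,
        LinearMap.mulLeft_apply]
      exact hmul i
    have := h2 h1
    rwa [Submodule.mem_comap, LinearMap.mulLeft_apply, hPcoe] at this
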